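/- Let X be a proper metric space and H an X-module. Let {φ_j}_{j∈J} be a locally finite partition of unity on X consisting of continuous functions φ_j : X → [0,1] with sup_j diam(supp φ_j) < ∞ (so each φ_j has compact support and lies in C₀(X)). Then for every S ∈ B(H): (a) for each ξ ∈ H the family (ρ(φ_j^{1/2}) S ρ(φ_j^{1/2}) ξ)_{j∈J} is summable, and the resulting operator Φ(S) := Σ_j ρ(φ_j^{1/2}) S ρ(φ_j^{1/2}) is bounded with ‖Φ(S)‖ ≤ ‖S‖; (b) Φ(S) has finite propagation; (c) if S is pseudolocal, then Φ(S) − S is locally compact. -/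

import Mathlib

/-- Pseudolocality of an operator with respect to a representation `ρ` of `C₀(X)`. -/
def IsPseudolocal {X : Type*} [TopologicalSpace X]
    {H : Type*} [NormedAddCommGroup H] [InnerProductSpace ℂ H] [CompleteSpace H]
    (ρ : ZeroAtInftyContinuousMap X ℂ →⋆ₙₐ[ℂ] (H →L[ℂ] H)) (T : H →L[ℂ] H) : Prop :=
  ∀ f : ZeroAtInftyContinuousMap X ℂ, IsCompactOperator ⇑(T * ρ f - ρ f * T)

/-- Local compactness of an operator with respect to a representation `ρ` of `C₀(X)`. -/
def IsLocallyCompactOp {X : Type*} [TopologicalSpace X]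
    {H : Type*} [NormedAddCommGroup H] [InnerProductSpace ℂ H] [CompleteSpace H]
    (ρ : ZeroAtInftyContinuousMap X ℂ →⋆ₙₐ[ℂ] (H →L[ℂ] H)) (T : H →L[ℂ] H) : Prop :=
  ∀ f : ZeroAtInftyContinuousMap X ℂ,
    IsCompactOperator ⇑(T * ρ f) ∧ IsCompactOperator ⇑(ρ f * T)

/-- An operator `T` has *finite propagation* if there is `R > 0` such that
`ρ(f) T ρ(g) = 0` whenever the supports of `f` and `g` are at distance greater than `R`. -/
def HasFinitePropagation {X : Type*} [MetricSpace X]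
    {H : Type*} [NormedAddCommGroup H] [InnerProductSpace ℂ H] [CompleteSpace H]
    (ρ : ZeroAtInftyContinuousMap X ℂ →⋆ₙₐ[ℂ] (H →L[ℂ] H)) (T : H →L[ℂ] H) : Prop :=
  ∃ R : ℝ, 0 < R ∧ ∀ f g : ZeroAtInftyContinuousMap X ℂ,
    (∀ x ∈ tsupport ⇑f, ∀ y ∈ tsupport ⇑g, R < dist x y) → ρ f * T * ρ g = 0

/-- The square root of a compactly supported continuous `[0,∞)`-valued function, as a
complex-valued continuous function vanishing at infinity. -/
noncomputable def sqrtC0 {X : Type} [MetricSpace X] [ProperSpace X]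
    (φ : C(X, ℝ)) (h : HasCompactSupport ⇑φ) : ZeroAtInftyContinuousMap X ℂ where
  toFun x := (Real.sqrt (φ x) : ℂ)
  continuous_toFun := by fun_prop
  zero_at_infty' := by
    have hsupp : HasCompactSupport fun x => ((Real.sqrt (φ x) : ℝ) : ℂ) := by
      apply HasCompactSupport.intro h.isCompact
      intro x hx
      have : φ x = 0 := image_eq_zero_of_notMem_tsupport hx
      simp [this]
    exact hsupp.is_zero_at_infty


open Function Set Filter Topology

set_option maxHeartbeats 1600000

/-- A compactly supported continuous real function, as a complex `C₀` function. -/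
noncomputable def toC0' {X : Type} [MetricSpace X] [ProperSpace X]
    (φ : C(X, ℝ)) (h : HasCompactSupport ⇑φ) : ZeroAtInftyContinuousMap X ℂ where
  toFun x := (φ x : ℂ)
  continuous_toFun := Complex.continuous_ofReal.comp φ.continuous
  zero_at_infty' := by
    have hsupp : HasCompactSupport fun x => ((φ x : ℝ) : ℂ) := by
      apply HasCompactSupport.intro h.isCompact
      intro x hx
      simp [image_eq_zero_of_notMem_tsupport hx]
    exact hsupp.is_zero_at_infty

@[simp] lemma toC0'_apply {X : Type} [MetricSpace X] [ProperSpace X]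
    (φ : C(X, ℝ)) (h : HasCompactSupport ⇑φ) (x : X) : toC0' φ h x = (φ x : ℂ) := rfl

lemma toC0'_hasCompactSupport {X : Type} [MetricSpace X] [ProperSpace X]
    (φ : C(X, ℝ)) (h : HasCompactSupport ⇑φ) : HasCompactSupport ⇑(toC0' φ h) := by
  apply HasCompactSupport.intro h.isCompact
  intro x hx
  simp [image_eq_zero_of_notMem_tsupport hx]

lemma c0_sum_apply {X ι : Type*} [TopologicalSpace X] (F : Finset ι)
    (g : ι → ZeroAtInftyContinuousMap X ℂ) (x : X) :
    (∑ j ∈ F, g j) x = ∑ j ∈ F, g j x := by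
  classical
  induction F using Finset.induction_on with
  | empty => simp
  | insert _ _ hj ih => rw [Finset.sum_insert hj, ZeroAtInftyContinuousMap.add_apply, ih,
      Finset.sum_insert hj]

lemma c0_norm_le {X : Type*} [TopologicalSpace X] {f : ZeroAtInftyContinuousMap X ℂ} {C : ℝ}
    (hC : 0 ≤ C) (h : ∀ x, ‖f x‖ ≤ C) : ‖f‖ ≤ C := by
  rw [← ZeroAtInftyContinuousMap.norm_toBCF_eq_norm]
  exact (BoundedContinuousFunction.norm_le hC).mpr h

lemma isCompactOperator_finset_sum {ι H : Type*} [NormedAddCommGroup H]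
    [InnerProductSpace ℂ H] (F : Finset ι) (A : ι → H →L[ℂ] H)
    (h : ∀ j ∈ F, IsCompactOperator ⇑(A j)) : IsCompactOperator ⇑(∑ j ∈ F, A j) := by
  classical
  induction F using Finset.induction_on with
  | empty => simpa using isCompactOperator_zero
  | @insert a s ha ih =>
      rw [Finset.sum_insert ha]
      have h1 := h a (Finset.mem_insert_self a s)
      have h2 := ih fun j hj => h j (Finset.mem_insert_of_mem hj)
      have : ⇑(A a + ∑ x ∈ s, A x) = ⇑(A a) + ⇑(∑ x ∈ s, A x) := by
        ext ξ; simp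
      rw [this]
      exact h1.add h2

@[simp] lemma sqrtC0_apply {X : Type} [MetricSpace X] [ProperSpace X]
    (φ : C(X, ℝ)) (h : HasCompactSupport ⇑φ) (x : X) :
    sqrtC0 φ h x = (Real.sqrt (φ x) : ℂ) := rfl

lemma star_sqrtC0 {X : Type} [MetricSpace X] [ProperSpace X]
    (φ : C(X, ℝ)) (h : HasCompactSupport ⇑φ) : star (sqrtC0 φ h) = sqrtC0 φ h := by
  apply ZeroAtInftyContinuousMap.ext
  intro x
  rw [ZeroAtInftyContinuousMap.star_apply, sqrtC0_apply, Complex.star_def, Complex.conj_ofReal]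

lemma sqrtC0_mul_self {X : Type} [MetricSpace X] [ProperSpace X]
    (φ : C(X, ℝ)) (h : HasCompactSupport ⇑φ) (hφ : ∀ x, 0 ≤ φ x) :
    sqrtC0 φ h * sqrtC0 φ h = toC0' φ h := by
  apply ZeroAtInftyContinuousMap.ext
  intro x
  rw [ZeroAtInftyContinuousMap.mul_apply, sqrtC0_apply, toC0'_apply, ← Complex.ofReal_mul,
    Real.mul_self_sqrt (hφ x)]

/-- Given a locally finite continuous partition of unity `{φ_j}` on a proper metric space
`X` whose supports have uniformly bounded diameter (hence are compact), the operator
`Φ(S) = ∑_j ρ(φ_j^{1/2}) S ρ(φ_j^{1/2})` is defined (the series converging pointwise),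
satisfies `‖Φ(S)‖ ≤ ‖S‖`, has finite propagation, and if `S` is pseudolocal then
`Φ(S) - S` is locally compact. -/
theorem pou_averaging_operator
    {X : Type} [MetricSpace X] [ProperSpace X]
    {H : Type} [NormedAddCommGroup H] [InnerProductSpace ℂ H] [CompleteSpace H]
    (ρ : ZeroAtInftyContinuousMap X ℂ →⋆ₙₐ[ℂ] (H →L[ℂ] H))
    {J : Type} (p : PartitionOfUnity J X Set.univ)
    (R : ℝ) (hdiam : ∀ j, ∀ x ∈ tsupport ⇑(p j), ∀ y ∈ tsupport ⇑(p j), dist x y ≤ R)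
    (hcomp : ∀ j, HasCompactSupport ⇑(p j))
    (S : H →L[ℂ] H) :
    ∃ ΦS : H →L[ℂ] H,
      (∀ ξ : H, HasSum
        (fun j => (ρ (sqrtC0 (p j) (hcomp j)) * S * ρ (sqrtC0 (p j) (hcomp j))) ξ)
        (ΦS ξ)) ∧
      ‖ΦS‖ ≤ ‖S‖ ∧
      HasFinitePropagation ρ ΦS ∧
      (IsPseudolocal ρ S → IsLocallyCompactOp ρ (ΦS - S)) := by
  classical
  set e : J → (H →L[ℂ] H) := fun j => ρ (sqrtC0 (p j) (hcomp j)) with he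
  set q : J → ZeroAtInftyContinuousMap X ℂ := fun j => toC0' (p j) (hcomp j) with hq
  have hρnorm : ∀ f : ZeroAtInftyContinuousMap X ℂ, ‖ρ f‖ ≤ ‖f‖ := fun f =>
    NonUnitalStarAlgHom.norm_apply_le ρ f
  have hee : ∀ j, e j * e j = ρ (q j) := by
    intro j
    rw [he, ← map_mul, sqrtC0_mul_self _ _ (fun x => p.nonneg j x)]
  have hadj : ∀ (j : J) (ξ η : H), @inner ℂ H _ (e j ξ) η = @inner ℂ H _ ξ (e j η) := by
    intro j ξ η
    have hstar : star (e j) = e j := by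
      rw [he]
      simp only
      rw [← map_star, star_sqrtC0]
    have hadj' : ContinuousLinearMap.adjoint (e j) = e j := by
      rw [← ContinuousLinearMap.star_eq_adjoint, hstar]
    conv_lhs => rw [← hadj']
    exact ContinuousLinearMap.adjoint_inner_left _ _ _
  -- partial sums of the partition are at most 1
  have hple : ∀ (F : Finset J) (x : X), ∑ j ∈ F, p j x ≤ 1 := by
    intro F x
    have hfin : {j | x ∈ Function.support fun y => p j y}.Finite :=
      p.locallyFinite.point_finite x
    have hsub : (Function.support fun j => p j x) ⊆ ↑hfin.toFinset := by
      intro j hj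
      simp only [Set.Finite.coe_toFinset, Set.mem_setOf_eq]
      exact hj
    have h2 : ∑ᶠ j, p j x = ∑ j ∈ hfin.toFinset, p j x :=
      finsum_eq_sum_of_support_subset _ hsub
    have h3 : ∑ j ∈ F, p j x ≤ ∑ j ∈ F ∪ hfin.toFinset, p j x :=
      Finset.sum_le_sum_of_subset_of_nonneg Finset.subset_union_left
        (fun j _ _ => p.nonneg j x)
    have h4 : ∑ j ∈ hfin.toFinset, p j x = ∑ j ∈ F ∪ hfin.toFinset, p j x := by
      apply Finset.sum_subset Finset.subset_union_right
      intro j _ hj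
      have hx : x ∉ Function.support fun y => p j y := fun hx => hj (hfin.mem_toFinset.mpr hx)
      exact Function.notMem_support.mp hx
    calc ∑ j ∈ F, p j x ≤ ∑ j ∈ F ∪ hfin.toFinset, p j x := h3
      _ = ∑ j ∈ hfin.toFinset, p j x := h4.symm
      _ = ∑ᶠ j, p j x := h2.symm
      _ = 1 := p.sum_eq_one (Set.mem_univ x)
  have hqnorm : ∀ F : Finset J, ‖∑ j ∈ F, q j‖ ≤ 1 := by
    intro F
    apply c0_norm_le zero_le_one
    intro x
    rw [c0_sum_apply]
    have : ∑ j ∈ F, q j x = ((∑ j ∈ F, p j x : ℝ) : ℂ) := by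
      rw [hq]; push_cast; rfl
    rw [this, Complex.norm_real, Real.norm_eq_abs,
      abs_of_nonneg (Finset.sum_nonneg fun j _ => p.nonneg j x)]
    exact hple F x
  -- Lemma A
  have hA : ∀ (F : Finset J) (ξ : H), ∑ j ∈ F, ‖e j ξ‖ ^ 2 ≤ ‖ξ‖ ^ 2 := by
    intro F ξ
    have h1 : ∀ j, ‖e j ξ‖ ^ 2 = RCLike.re (@inner ℂ H _ ξ (ρ (q j) ξ)) := by
      intro j
      rw [← inner_self_eq_norm_sq (𝕜 := ℂ)]
      congr 1
      rw [hadj]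
      congr 1
      rw [← hee j]
      rfl
    calc ∑ j ∈ F, ‖e j ξ‖ ^ 2 = RCLike.re (@inner ℂ H _ ξ (ρ (∑ j ∈ F, q j) ξ)) := by
          simp_rw [h1]
          rw [← map_sum]
          congr 1
          rw [map_sum ρ]
          rw [ContinuousLinearMap.sum_apply, inner_sum]
      _ ≤ ‖ξ‖ * ‖ρ (∑ j ∈ F, q j) ξ‖ := re_inner_le_norm _ _
      _ ≤ ‖ξ‖ * (‖ρ (∑ j ∈ F, q j)‖ * ‖ξ‖) := by
          gcongr
          exact (ρ (∑ j ∈ F, q j)).le_opNorm ξ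
      _ ≤ ‖ξ‖ * (1 * ‖ξ‖) := by
          gcongr
          exact le_trans (hρnorm _) (hqnorm F)
      _ = ‖ξ‖ ^ 2 := by ring
  -- Lemma B : Cauchy-Schwarz bound for partial sums
  have hB : ∀ (F : Finset J) (ξ : H),
      ‖∑ j ∈ F, e j (S (e j ξ))‖ ≤ ‖S‖ * Real.sqrt (∑ j ∈ F, ‖e j ξ‖ ^ 2) := by
    intro F ξ
    set v := ∑ j ∈ F, e j (S (e j ξ)) with hv
    set C := ‖S‖ * Real.sqrt (∑ j ∈ F, ‖e j ξ‖ ^ 2) with hC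
    have hCnn : (0:ℝ) ≤ C := mul_nonneg (norm_nonneg _) (Real.sqrt_nonneg _)
    rcases eq_or_ne v 0 with h0 | h0
    · rw [h0, norm_zero]; exact hCnn
    have key : ‖v‖ ^ 2 ≤ C * ‖v‖ := by
      have e1 : ‖v‖ ^ 2 = RCLike.re (@inner ℂ H _ v v) := (inner_self_eq_norm_sq v).symm
      have e2 : @inner ℂ H _ v v = ∑ j ∈ F, @inner ℂ H _ (S (e j ξ)) (e j v) := by
        calc @inner ℂ H _ v v = ∑ j ∈ F, @inner ℂ H _ (e j (S (e j ξ))) v := by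
              rw [hv]; exact sum_inner F _ v
          _ = ∑ j ∈ F, @inner ℂ H _ (S (e j ξ)) (e j v) :=
              Finset.sum_congr rfl fun j _ => hadj j _ v
      have e3 : RCLike.re (@inner ℂ H _ v v) ≤ ∑ j ∈ F, ‖S (e j ξ)‖ * ‖e j v‖ := by
        rw [e2, map_sum]
        exact Finset.sum_le_sum fun j _ => re_inner_le_norm _ _
      have e4 : ∑ j ∈ F, ‖S (e j ξ)‖ * ‖e j v‖ ≤ ‖S‖ * ∑ j ∈ F, ‖e j ξ‖ * ‖e j v‖ := by
        rw [Finset.mul_sum]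
        apply Finset.sum_le_sum
        intro j _
        rw [← mul_assoc]
        exact mul_le_mul_of_nonneg_right (S.le_opNorm (e j ξ)) (norm_nonneg _)
      have e5 : ∑ j ∈ F, ‖e j ξ‖ * ‖e j v‖ ≤
          Real.sqrt (∑ j ∈ F, ‖e j ξ‖ ^ 2) * Real.sqrt (∑ j ∈ F, ‖e j v‖ ^ 2) := by
        have hcs := Finset.sum_mul_sq_le_sq_mul_sq F (fun j => ‖e j ξ‖) (fun j => ‖e j v‖)
        have hnn2 : 0 ≤ ∑ j ∈ F, ‖e j ξ‖ * ‖e j v‖ :=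
          Finset.sum_nonneg fun j _ => mul_nonneg (norm_nonneg _) (norm_nonneg _)
        calc ∑ j ∈ F, ‖e j ξ‖ * ‖e j v‖
            = Real.sqrt ((∑ j ∈ F, ‖e j ξ‖ * ‖e j v‖) ^ 2) := (Real.sqrt_sq hnn2).symm
          _ ≤ Real.sqrt ((∑ j ∈ F, ‖e j ξ‖ ^ 2) * ∑ j ∈ F, ‖e j v‖ ^ 2) :=
              Real.sqrt_le_sqrt hcs
          _ = _ := Real.sqrt_mul (Finset.sum_nonneg fun j _ => sq_nonneg _) _
      have e6 : Real.sqrt (∑ j ∈ F, ‖e j v‖ ^ 2) ≤ ‖v‖ := by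
        calc Real.sqrt (∑ j ∈ F, ‖e j v‖ ^ 2) ≤ Real.sqrt (‖v‖ ^ 2) :=
              Real.sqrt_le_sqrt (hA F v)
          _ = ‖v‖ := Real.sqrt_sq (norm_nonneg v)
      calc ‖v‖ ^ 2 = RCLike.re (@inner ℂ H _ v v) := e1
        _ ≤ ∑ j ∈ F, ‖S (e j ξ)‖ * ‖e j v‖ := e3
        _ ≤ ‖S‖ * ∑ j ∈ F, ‖e j ξ‖ * ‖e j v‖ := e4
        _ ≤ ‖S‖ * (Real.sqrt (∑ j ∈ F, ‖e j ξ‖ ^ 2) * Real.sqrt (∑ j ∈ F, ‖e j v‖ ^ 2)) :=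
            mul_le_mul_of_nonneg_left e5 (norm_nonneg S)
        _ ≤ ‖S‖ * (Real.sqrt (∑ j ∈ F, ‖e j ξ‖ ^ 2) * ‖v‖) := by
            gcongr
        _ = C * ‖v‖ := by rw [hC]; ring
    have hvpos : 0 < ‖v‖ := norm_pos_iff.mpr h0
    nlinarith [key, hvpos]
  -- summability of the squares
  have hrs : ∀ ξ : H, Summable (fun j => ‖e j ξ‖ ^ 2) := fun ξ =>
    summable_of_sum_le (fun j => sq_nonneg _) (fun F => hA F ξ)
  -- summability of the vector series
  have hsummable : ∀ ξ : H, Summable (fun j => e j (S (e j ξ))) := by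
    intro ξ
    rw [summable_iff_vanishing_norm]
    intro ε hε
    have hδ : (0:ℝ) < (ε / (‖S‖ + 1)) ^ 2 := by positivity
    obtain ⟨s, hs⟩ := summable_iff_vanishing_norm.mp (hrs ξ) _ hδ
    refine ⟨s, fun t ht => ?_⟩
    have h1 := hs t ht
    have h2 : ∑ j ∈ t, ‖e j ξ‖ ^ 2 < (ε / (‖S‖ + 1)) ^ 2 :=
      lt_of_le_of_lt (le_abs_self _) (by rwa [Real.norm_eq_abs] at h1)
    have h3 : Real.sqrt (∑ j ∈ t, ‖e j ξ‖ ^ 2) < ε / (‖S‖ + 1) := by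
      have : ε / (‖S‖ + 1) = Real.sqrt ((ε / (‖S‖ + 1)) ^ 2) :=
        (Real.sqrt_sq (by positivity)).symm
      rw [this]
      exact Real.sqrt_lt_sqrt (Finset.sum_nonneg fun j _ => sq_nonneg _) h2
    calc ‖∑ j ∈ t, e j (S (e j ξ))‖ ≤ ‖S‖ * Real.sqrt (∑ j ∈ t, ‖e j ξ‖ ^ 2) := hB t ξ
      _ ≤ ‖S‖ * (ε / (‖S‖ + 1)) := mul_le_mul_of_nonneg_left h3.le (norm_nonneg S)
      _ < ε := by
          rw [mul_comm, div_mul_eq_mul_div, div_lt_iff₀ (by positivity)]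
          nlinarith [norm_nonneg S, hε]
  -- the tsum is bounded by ‖S‖ * ‖ξ‖
  have hbound : ∀ ξ : H, ‖∑' j, e j (S (e j ξ))‖ ≤ ‖S‖ * ‖ξ‖ := by
    intro ξ
    have hts := (hsummable ξ).hasSum
    refine le_of_tendsto hts.norm (Filter.Eventually.of_forall fun F => ?_)
    calc ‖∑ j ∈ F, e j (S (e j ξ))‖ ≤ ‖S‖ * Real.sqrt (∑ j ∈ F, ‖e j ξ‖ ^ 2) := hB F ξ
      _ ≤ ‖S‖ * Real.sqrt (‖ξ‖ ^ 2) :=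
          mul_le_mul_of_nonneg_left (Real.sqrt_le_sqrt (hA F ξ)) (norm_nonneg S)
      _ = ‖S‖ * ‖ξ‖ := by rw [Real.sqrt_sq (norm_nonneg ξ)]
  -- construct the operator
  let glin : H →ₗ[ℂ] H :=
    { toFun := fun ξ => ∑' j, e j (S (e j ξ))
      map_add' := by
        intro ξ η
        have h1 : (fun j => e j (S (e j (ξ + η)))) =
            fun j => e j (S (e j ξ)) + e j (S (e j η)) := by
          funext j; rw [map_add, map_add, map_add]
        show (∑' j, e j (S (e j (ξ + η)))) = (∑' j, e j (S (e j ξ))) + ∑' j, e j (S (e j η))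
        rw [h1]
        exact Summable.tsum_add (hsummable ξ) (hsummable η)
      map_smul' := by
        intro c ξ
        have h1 : (fun j => e j (S (e j (c • ξ)))) = fun j => c • e j (S (e j ξ)) := by
          funext j; rw [map_smul, map_smul, map_smul]
        show (∑' j, e j (S (e j (c • ξ)))) = c • ∑' j, e j (S (e j ξ))
        rw [h1]
        exact ((hsummable ξ).hasSum.const_smul c).tsum_eq }
  let ΦS : H →L[ℂ] H := glin.mkContinuous ‖S‖ hbound
  have hHasSum : ∀ ξ : H, HasSum (fun j => e j (S (e j ξ))) (ΦS ξ) := fun ξ =>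
    (hsummable ξ).hasSum
  have hfuneq : ∀ ξ : H,
      (fun j => (ρ (sqrtC0 (p j) (hcomp j)) * S * ρ (sqrtC0 (p j) (hcomp j))) ξ) =
      fun j => e j (S (e j ξ)) := by
    intro ξ; funext j; rw [he]; rfl
  refine ⟨ΦS, fun ξ => by rw [hfuneq ξ]; exact hHasSum ξ,
    glin.mkContinuous_norm_le (norm_nonneg S) hbound, ?_, ?_⟩
  · -- finite propagation
    refine ⟨max R 1, lt_of_lt_of_le one_pos (le_max_right R 1), ?_⟩
    intro f g hfar
    ext ξ
    have goal_eq : (ρ f * ΦS * ρ g) ξ = ρ f (ΦS (ρ g ξ)) := rfl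
    rw [goal_eq, ContinuousLinearMap.zero_apply]
    have hsum2 := (ρ f).hasSum (hHasSum ((ρ g) ξ))
    have hzero : ∀ j, (ρ f) (e j (S (e j ((ρ g) ξ)))) = 0 := by
      intro j
      by_cases hcase : ∃ x ∈ tsupport ⇑f, x ∈ tsupport ⇑(p j)
      · -- then supp g is far from supp (p j), so e j ∘ ρ g = 0
        obtain ⟨x, hxf, hxj⟩ := hcase
        have hg0 : sqrtC0 (p j) (hcomp j) * g = 0 := by
          apply ZeroAtInftyContinuousMap.ext
          intro y
          rw [ZeroAtInftyContinuousMap.mul_apply, ZeroAtInftyContinuousMap.zero_apply]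
          by_cases hgy : g y = 0
          · rw [hgy, mul_zero]
          · have hy : y ∈ tsupport ⇑g := subset_tsupport _ (Function.mem_support.mpr hgy)
            have hpy : p j y = 0 := by
              by_contra hpy
              have hyj : y ∈ tsupport ⇑(p j) :=
                subset_tsupport _ (Function.mem_support.mpr hpy)
              have h5 := hdiam j x hxj y hyj
              have h6 := hfar x hxf y hy
              have := le_max_left R 1
              linarith
            rw [sqrtC0_apply, hpy, Real.sqrt_zero, Complex.ofReal_zero, zero_mul]
        have h2 : e j * ρ g = 0 := by
          rw [he]
          simp only
          rw [← map_mul, hg0, map_zero]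
        have h3 : e j ((ρ g) ξ) = 0 := by
          have := congrArg (fun T : H →L[ℂ] H => T ξ) h2
          simpa using this
        rw [h3, map_zero, map_zero, map_zero]
      · -- supp f misses supp (p j), so ρ f ∘ e j = 0
        push_neg at hcase
        have hf0 : f * sqrtC0 (p j) (hcomp j) = 0 := by
          apply ZeroAtInftyContinuousMap.ext
          intro y
          rw [ZeroAtInftyContinuousMap.mul_apply, ZeroAtInftyContinuousMap.zero_apply]
          by_cases hfy : f y = 0
          · rw [hfy, zero_mul]
          · have hy : y ∈ tsupport ⇑f := subset_tsupport _ (Function.mem_support.mpr hfy)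
            have hpy : p j y = 0 := by
              by_contra hpy
              exact hcase y hy (subset_tsupport _ (Function.mem_support.mpr hpy))
            rw [sqrtC0_apply, hpy, Real.sqrt_zero, Complex.ofReal_zero, mul_zero]
        have h2 : ρ f * e j = 0 := by
          rw [he]
          simp only
          rw [← map_mul, hf0, map_zero]
        have h3 := congrArg (fun T : H →L[ℂ] H => T (S (e j ((ρ g) ξ)))) h2
        simpa using h3
    have hfin : HasSum (fun _ : J => (0 : H)) ((ρ f) (ΦS ((ρ g) ξ))) := by
      rwa [funext hzero] at hsum2
    exact hfin.unique hasSum_zero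
  · -- local compactness
    intro hps f
    have hkey : ∀ f : ZeroAtInftyContinuousMap X ℂ, HasCompactSupport ⇑f →
        IsCompactOperator ⇑((ΦS - S) * ρ f) ∧ IsCompactOperator ⇑(ρ f * (ΦS - S)) := by
      clear f
      intro f hKf
      have hfinF : {j | (Function.support ⇑(p j) ∩ tsupport ⇑f).Nonempty}.Finite :=
        p.locallyFinite.finite_nonempty_inter_compact hKf
      set Fs := hfinF.toFinset with hFs
      have hmem : ∀ j, j ∈ Fs ↔ (Function.support ⇑(p j) ∩ tsupport ⇑f).Nonempty :=
        fun j => hfinF.mem_toFinset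
      have hp0 : ∀ j ∉ Fs, ∀ y : X, f y = 0 ∨ p j y = 0 := by
        intro j hj y
        by_cases hfy : f y = 0
        · exact Or.inl hfy
        · refine Or.inr ?_
          by_contra hpy
          exact hj ((hmem j).mpr ⟨y, Function.mem_support.mpr hpy,
            subset_tsupport _ (Function.mem_support.mpr hfy)⟩)
      have hsf0 : ∀ j ∉ Fs, sqrtC0 (p j) (hcomp j) * f = 0 := by
        intro j hj
        apply ZeroAtInftyContinuousMap.ext
        intro y
        rw [ZeroAtInftyContinuousMap.mul_apply, ZeroAtInftyContinuousMap.zero_apply]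
        rcases hp0 j hj y with h | h
        · rw [h, mul_zero]
        · rw [sqrtC0_apply, h, Real.sqrt_zero, Complex.ofReal_zero, zero_mul]
      have hfs0 : ∀ j ∉ Fs, f * sqrtC0 (p j) (hcomp j) = 0 := by
        intro j hj
        rw [mul_comm]
        exact hsf0 j hj
      have hdecomp : ∀ y, f y ≠ 0 → ∑ j ∈ Fs, ((p j y : ℝ) : ℂ) = 1 := by
        intro y hfy
        have hy : y ∈ tsupport ⇑f := subset_tsupport _ (Function.mem_support.mpr hfy)
        have hsub : (Function.support fun j => p j y) ⊆ ↑Fs := by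
          intro j hj
          exact (hmem j).mpr ⟨y, hj, hy⟩
        have h1 : ∑ j ∈ Fs, p j y = 1 := by
          rw [← finsum_eq_sum_of_support_subset _ hsub]
          exact p.sum_eq_one (Set.mem_univ y)
        calc ∑ j ∈ Fs, ((p j y : ℝ) : ℂ) = ((∑ j ∈ Fs, p j y : ℝ) : ℂ) := by push_cast; rfl
          _ = 1 := by rw [h1, Complex.ofReal_one]
      have hdecompL : (∑ j ∈ Fs, q j * f) = f := by
        apply ZeroAtInftyContinuousMap.ext
        intro y
        rw [c0_sum_apply]
        have hterm : ∀ j ∈ Fs, (q j * f) y = ((p j y : ℝ) : ℂ) * f y := fun j _ => by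
          rw [ZeroAtInftyContinuousMap.mul_apply, hq]; rfl
        rw [Finset.sum_congr rfl hterm, ← Finset.sum_mul]
        by_cases hfy : f y = 0
        · rw [hfy, mul_zero]
        · rw [hdecomp y hfy, one_mul]
      have hdecompR : (∑ j ∈ Fs, f * q j) = f := by
        rw [Finset.sum_congr rfl fun j _ => mul_comm f (q j)]
        exact hdecompL
      have hρfL : ρ f = ∑ j ∈ Fs, ρ (q j) * ρ f := by
        conv_lhs => rw [← hdecompL]
        rw [map_sum]
        exact Finset.sum_congr rfl fun j _ => map_mul ρ _ _
      have hρfR : ρ f = ∑ j ∈ Fs, ρ f * ρ (q j) := by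
        conv_lhs => rw [← hdecompR]
        rw [map_sum]
        exact Finset.sum_congr rfl fun j _ => map_mul ρ _ _
      have heρf0 : ∀ j ∉ Fs, e j * ρ f = 0 := by
        intro j hj
        rw [he]
        simp only
        rw [← map_mul, hsf0 j hj, map_zero]
      have hρfe0 : ∀ j ∉ Fs, ρ f * e j = 0 := by
        intro j hj
        rw [he]
        simp only
        rw [← map_mul, hfs0 j hj, map_zero]
      have hΦρ : ΦS * ρ f = ∑ j ∈ Fs, e j * S * (e j * ρ f) := by
        ext ξ
        have h1 := hHasSum ((ρ f) ξ)
        have h2 : ∀ j ∉ Fs, e j (S (e j ((ρ f) ξ))) = 0 := by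
          intro j hj
          have h3 : e j ((ρ f) ξ) = 0 := by
            have := congrArg (fun T : H →L[ℂ] H => T ξ) (heρf0 j hj)
            simpa using this
          rw [h3, map_zero, map_zero]
        have h4 := h1.unique (hasSum_sum_of_ne_finset_zero h2)
        calc (ΦS * ρ f) ξ = ΦS ((ρ f) ξ) := rfl
          _ = ∑ j ∈ Fs, e j (S (e j ((ρ f) ξ))) := h4
          _ = (∑ j ∈ Fs, e j * S * (e j * ρ f)) ξ := by
              rw [ContinuousLinearMap.sum_apply]
              exact Finset.sum_congr rfl fun j _ => by
                simp [ContinuousLinearMap.mul_apply]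
      have hρΦ : ρ f * ΦS = ∑ j ∈ Fs, ρ f * e j * S * e j := by
        ext ξ
        have h1 := (ρ f).hasSum (hHasSum ξ)
        have h2 : ∀ j ∉ Fs, (ρ f) (e j (S (e j ξ))) = 0 := by
          intro j hj
          have := congrArg (fun T : H →L[ℂ] H => T (S (e j ξ))) (hρfe0 j hj)
          simpa using this
        have h4 := h1.unique (hasSum_sum_of_ne_finset_zero h2)
        calc (ρ f * ΦS) ξ = (ρ f) (ΦS ξ) := rfl
          _ = ∑ j ∈ Fs, (ρ f) (e j (S (e j ξ))) := h4
          _ = (∑ j ∈ Fs, ρ f * e j * S * e j) ξ := by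
              rw [ContinuousLinearMap.sum_apply]
              exact Finset.sum_congr rfl fun j _ => by
                simp [ContinuousLinearMap.mul_apply]
      have hSρ : S * ρ f = ∑ j ∈ Fs, S * (ρ (q j) * ρ f) := by
        conv_lhs => rw [hρfL]
        rw [Finset.mul_sum]
      have hρS : ρ f * S = ∑ j ∈ Fs, ρ f * ρ (q j) * S := by
        conv_lhs => rw [hρfR]
        rw [Finset.sum_mul]
      have hId1 : (ΦS - S) * ρ f = ∑ j ∈ Fs, (e j * S - S * e j) * (e j * ρ f) := by
        rw [sub_mul, hΦρ, hSρ, ← Finset.sum_sub_distrib]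
        refine Finset.sum_congr rfl fun j _ => ?_
        rw [← hee j]
        noncomm_ring
      have hId2 : ρ f * (ΦS - S) = ∑ j ∈ Fs, (ρ f * e j) * (S * e j - e j * S) := by
        rw [mul_sub, hρΦ, hρS, ← Finset.sum_sub_distrib]
        refine Finset.sum_congr rfl fun j _ => ?_
        rw [← hee j]
        noncomm_ring
      have hcommut : ∀ j : J, IsCompactOperator ⇑(S * e j - e j * S) := fun j =>
        hps (sqrtC0 (p j) (hcomp j))
      constructor
      · rw [hId1]
        apply isCompactOperator_finset_sum
        intro j _
        have h2 : IsCompactOperator ⇑(e j * S - S * e j) := by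
          have h3 : (e j * S - S * e j : H →L[ℂ] H) = -(S * e j - e j * S) := by
            rw [neg_sub]
          have h4 : ⇑(-(S * e j - e j * S) : H →L[ℂ] H) = -⇑(S * e j - e j * S) := by
            ext ξ; simp
          rw [h3, h4]
          exact (hcommut j).neg
        exact h2.comp_clm (e j * ρ f)
      · rw [hId2]
        apply isCompactOperator_finset_sum
        intro j _
        exact (hcommut j).clm_comp (ρ f * e j)
    -- Step 2: approximation by compactly supported functions
    have happrox : ∀ n : ℕ, ∃ f' : ZeroAtInftyContinuousMap X ℂ,
        HasCompactSupport ⇑f' ∧ ‖f - f'‖ ≤ 1 / (n + 1) := by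
      intro n
      have hε : (0:ℝ) < 1 / (n + 1) := by positivity
      have hz : Filter.Tendsto ⇑f (Filter.cocompact X) (𝓝 0) := zero_at_infty f
      have hev : {x : X | ‖f x‖ < 1 / (n + 1)} ∈ Filter.cocompact X := by
        refine Filter.mem_of_superset (hz (Metric.ball_mem_nhds (0:ℂ) hε)) ?_
        intro x hx
        simpa [mem_ball_zero_iff] using hx
      obtain ⟨K, hKc, hKsub⟩ := Filter.mem_cocompact.mp hev
      obtain ⟨χ, hχ1, hχ0, hχc, hχ01⟩ :=
        exists_continuous_one_zero_of_isCompact hKc isClosed_empty (Set.disjoint_empty _)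
      refine ⟨f * toC0' χ hχc, ?_, ?_⟩
      · rw [ZeroAtInftyContinuousMap.coe_mul]
        exact (toC0'_hasCompactSupport χ hχc).mul_left
      · apply c0_norm_le hε.le
        intro x
        rw [ZeroAtInftyContinuousMap.sub_apply, ZeroAtInftyContinuousMap.mul_apply, toC0'_apply]
        by_cases hxK : x ∈ K
        · have h1 : χ x = 1 := hχ1 hxK
          rw [h1, Complex.ofReal_one, mul_one, sub_self, norm_zero]
          exact hε.le
        · have h2 : ‖f x‖ < 1 / (n + 1) := hKsub hxK
          have h3 := hχ01 x
          have h5 : f x - f x * ((χ x : ℝ) : ℂ) = f x * (((1 - χ x : ℝ)) : ℂ) := by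
            push_cast
            ring
          rw [h5, norm_mul]
          have h4 : ‖(((1 - χ x : ℝ)) : ℂ)‖ ≤ 1 := by
            rw [Complex.norm_real, Real.norm_eq_abs, abs_of_nonneg (by linarith [h3.2])]
            linarith [h3.1]
          calc ‖f x‖ * ‖(((1 - χ x : ℝ)) : ℂ)‖ ≤ ‖f x‖ * 1 := by gcongr
            _ = ‖f x‖ := mul_one _
            _ ≤ 1 / (n + 1) := h2.le
    choose fseq hfc hfnorm using happrox
    constructor
    · have htend : Filter.Tendsto (fun n => (ΦS - S) * ρ (fseq n)) Filter.atTop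
          (𝓝 ((ΦS - S) * ρ f)) := by
        rw [tendsto_iff_norm_sub_tendsto_zero]
        apply squeeze_zero (g := fun n : ℕ => ‖ΦS - S‖ * (1 / (n + 1)))
          (fun n => norm_nonneg _)
        · intro n
          have h1 : (ΦS - S) * ρ (fseq n) - (ΦS - S) * ρ f = (ΦS - S) * ρ (fseq n - f) := by
            rw [← mul_sub, map_sub]
          rw [h1]
          calc ‖(ΦS - S) * ρ (fseq n - f)‖ ≤ ‖ΦS - S‖ * ‖ρ (fseq n - f)‖ := norm_mul_le _ _
            _ ≤ ‖ΦS - S‖ * (1 / (n + 1)) :=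
                mul_le_mul_of_nonneg_left
                  (le_trans (hρnorm _) (by rw [norm_sub_rev]; exact hfnorm n))
                  (norm_nonneg _)
        · simpa using tendsto_one_div_add_atTop_nhds_zero_nat.const_mul ‖ΦS - S‖
      exact isCompactOperator_of_tendsto htend
        (Filter.Eventually.of_forall fun n => (hkey (fseq n) (hfc n)).1)
    · have htend : Filter.Tendsto (fun n => ρ (fseq n) * (ΦS - S)) Filter.atTop
          (𝓝 (ρ f * (ΦS - S))) := by
        rw [tendsto_iff_norm_sub_tendsto_zero]
        apply squeeze_zero (g := fun n : ℕ => (1 / (n + 1)) * ‖ΦS - S‖)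
          (fun n => norm_nonneg _)
        · intro n
          have h1 : ρ (fseq n) * (ΦS - S) - ρ f * (ΦS - S) = ρ (fseq n - f) * (ΦS - S) := by
            rw [← sub_mul, map_sub]
          rw [h1]
          calc ‖ρ (fseq n - f) * (ΦS - S)‖ ≤ ‖ρ (fseq n - f)‖ * ‖ΦS - S‖ := norm_mul_le _ _
            _ ≤ (1 / (n + 1)) * ‖ΦS - S‖ :=
                mul_le_mul_of_nonneg_right
                  (le_trans (hρnorm _) (by rw [norm_sub_rev]; exact hfnorm n))
                  (norm_nonneg _)
        · simpa using tendsto_one_div_add_atTop_nhds_zero_nat.mul_const ‖ΦS - S‖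
      exact isCompactOperator_of_tendsto htend
        (Filter.Eventually.of_forall fun n => (hkey (fseq n) (hfc n)).2)
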